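/- arXiv:2311.07579 — 3 statements merged into one kernel-verified Lean document; each statement's English description precedes it below -/
import Mathlib

section
/- Let d be a positive integer, let theta be a real number with 0 < theta < 1/4, let c be a point of R^d, and let x and y be independent random vectors, each uniformly distributed on the closed unit ball of radius 1 centered at c in R^d. Then the probability that the inner product of (y - x) with (x - c) is at least theta equals the integral over t from 2*sqrt(theta) to 1 of d * t^(d-1) * (t^2/4 - theta)^(d/2) dt. -/
/-!
For fixed `y`, the identity `⟪y - x, x - c⟫ = ‖y - c‖² / 4 - ‖x - (c + y) / 2‖²` shows that the
admissible `x` form the closed ball around the midpoint of `c` and `y` of radius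
`√(‖y - c‖² / 4 - θ)` (empty if the radicand is negative). This ball lies inside the unit ball
around `c`, so its probability is `(‖y - c‖² / 4 - θ) ^ (d / 2)`. Averaging over `y` in polar
coordinates, where `‖y - c‖` has density `d t ^ (d - 1)` on `[0, 1]`, gives the integral, whose
integrand vanishes below `t = 2 √θ`.
-/

open MeasureTheory
open scoped RealInnerProductSpace

/-- The uniform probability distribution on the closed unit ball of radius 1
centered at `c` in `ℝ^d`: the restriction of Lebesgue measure to the ball,
normalized to total mass 1. -/
noncomputable def uniformUnitBall (d : ℕ) (c : EuclideanSpace ℝ (Fin d)) :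
    Measure (EuclideanSpace ℝ (Fin d)) :=
  (volume (Metric.closedBall c 1))⁻¹ • volume.restrict (Metric.closedBall c 1)

open Metric Module

section Geometry

variable {E : Type*} [NormedAddCommGroup E] [InnerProductSpace ℝ E]

lemma inner_sub_sub_eq_sq_norm_div_four_sub_sq_dist_midpoint (c x y : E) :
    ⟪y - x, x - c⟫ = ‖y - c‖ ^ 2 / 4 - dist x (midpoint ℝ c y) ^ 2 := by
  have hmid : x - midpoint ℝ c y = (2⁻¹ : ℝ) • ((x - c) - (y - x)) := by
    rw [midpoint_eq_smul_add, invOf_eq_inv]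
    module
  rw [dist_eq_norm, hmid, norm_smul, mul_pow, show y - c = (y - x) + (x - c) by abel,
    norm_add_sq_real, norm_sub_sq_real (x - c), real_inner_comm (x - c), norm_inv, Real.norm_two]
  ring

lemma setOf_le_inner_sub_sub_eq_closedBall {θ : ℝ} {c y : E} (hθ : θ ≤ ‖y - c‖ ^ 2 / 4) :
    {x | θ ≤ ⟪y - x, x - c⟫} = closedBall (midpoint ℝ c y) (√(‖y - c‖ ^ 2 / 4 - θ)) := by
  ext x
  rw [Set.mem_ofPred_eq, inner_sub_sub_eq_sq_norm_div_four_sub_sq_dist_midpoint, mem_closedBall,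
    Real.le_sqrt dist_nonneg (sub_nonneg.2 hθ)]
  constructor <;> intro h <;> linarith

lemma setOf_le_inner_sub_sub_eq_empty {θ : ℝ} {c y : E} (hθ : ‖y - c‖ ^ 2 / 4 < θ) :
    {x | θ ≤ ⟪y - x, x - c⟫} = ∅ := by
  refine Set.eq_empty_of_forall_notMem fun x hx => ?_
  rw [Set.mem_ofPred_eq, inner_sub_sub_eq_sq_norm_div_four_sub_sq_dist_midpoint] at hx
  nlinarith [sq_nonneg (dist x (midpoint ℝ c y))]

lemma closedBall_midpoint_subset_closedBall {θ r : ℝ} {c y : E} (hθ : 0 ≤ θ)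
    (hy : y ∈ closedBall c r) :
    closedBall (midpoint ℝ c y) (√(‖y - c‖ ^ 2 / 4 - θ)) ⊆ closedBall c r := by
  refine closedBall_subset_closedBall' ?_
  have hradius : √(‖y - c‖ ^ 2 / 4 - θ) ≤ ‖y - c‖ / 2 :=
    Real.sqrt_le_iff.2 ⟨by positivity, by linarith⟩
  rw [dist_midpoint_left, Real.norm_two, dist_comm, dist_eq_norm]
  rw [mem_closedBall, dist_eq_norm] at hy
  linarith

end Geometry

section Haar

variable {E : Type*} [NormedAddCommGroup E] [NormedSpace ℝ E] [FiniteDimensional ℝ E]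
  [MeasurableSpace E] [BorelSpace E] (μ : Measure E) [μ.IsAddHaarMeasure]

lemma addHaar_closedBall_one (c : E) : μ (closedBall c 1) = μ (ball 0 1) := by
  rw [Measure.addHaar_closedBall_center, Measure.addHaar_unitClosedBall_eq_addHaar_unitBall]

lemma setIntegral_closedBall_fun_norm_sub [Nontrivial E] (f : ℝ → ℝ) (c : E) :
    ∫ y in closedBall c 1, f ‖y - c‖ ∂μ
      = finrank ℝ E * μ.real (ball 0 1) * ∫ t in 0..1, t ^ (finrank ℝ E - 1) * f t := by
  calc ∫ y in closedBall c 1, f ‖y - c‖ ∂μ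
      = ∫ y, (Set.Iic 1).indicator f ‖y - c‖ ∂μ := by
        rw [← integral_indicator measurableSet_closedBall]
        congr 1 with y
        by_cases hy : ‖y - c‖ ≤ 1 <;> simp [hy, dist_eq_norm]
    _ = ∫ x, (Set.Iic 1).indicator f ‖x‖ ∂μ :=
        integral_sub_right_eq_self (fun x => (Set.Iic 1).indicator f ‖x‖) c
    _ = finrank ℝ E • μ.real (ball 0 1) •
          ∫ t in Set.Ioi 0, (Set.Iic 1).indicator (fun t => t ^ (finrank ℝ E - 1) * f t) t := by
        rw [integral_fun_norm_addHaar]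
        simp only [← smul_eq_mul, Set.indicator_smul_apply]
    _ = _ := by
        rw [setIntegral_indicator measurableSet_Iic, Set.Ioi_inter_Iic,
          ← intervalIntegral.integral_of_le zero_le_one, nsmul_eq_mul, smul_eq_mul, mul_assoc]

end Haar

section Uniform

variable {d : ℕ} {c : EuclideanSpace ℝ (Fin d)}

instance isProbabilityMeasure_uniformUnitBall : IsProbabilityMeasure (uniformUnitBall d c) :=
  ⟨by rw [uniformUnitBall, Measure.smul_apply, Measure.restrict_apply_univ, smul_eq_mul,
    ENNReal.inv_mul_cancel (measure_closedBall_pos _ _ one_pos).ne' measure_closedBall_lt_top.ne]⟩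

lemma ae_uniformUnitBall_mem_closedBall : ∀ᵐ y ∂uniformUnitBall d c, y ∈ closedBall c 1 :=
  Measure.ae_smul_measure (ae_restrict_mem measurableSet_closedBall) _

lemma uniformUnitBall_closedBall {x : EuclideanSpace ℝ (Fin d)} {r : ℝ} (hr : 0 ≤ r)
    (hsub : closedBall x r ⊆ closedBall c 1) :
    uniformUnitBall d c (closedBall x r) = ENNReal.ofReal (r ^ d) := by
  rw [uniformUnitBall, Measure.smul_apply, Measure.restrict_apply measurableSet_closedBall,
    Set.inter_eq_left.2 hsub, Measure.addHaar_closedBall _ _ hr, finrank_euclideanSpace_fin,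
    ← addHaar_closedBall_one volume c, smul_eq_mul, mul_left_comm,
    ENNReal.inv_mul_cancel (measure_closedBall_pos _ _ one_pos).ne' measure_closedBall_lt_top.ne,
    mul_one]

lemma uniformUnitBall_setOf_le_inner_sub_sub (hd : d ≠ 0) {θ : ℝ} (hθ : 0 ≤ θ)
    {y : EuclideanSpace ℝ (Fin d)} (hy : y ∈ closedBall c 1) :
    uniformUnitBall d c {x | θ ≤ ⟪y - x, x - c⟫}
      = ENNReal.ofReal (√(‖y - c‖ ^ 2 / 4 - θ) ^ d) := by
  rcases le_or_gt θ (‖y - c‖ ^ 2 / 4) with hθy | hθy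
  · rw [setOf_le_inner_sub_sub_eq_closedBall hθy,
      uniformUnitBall_closedBall (Real.sqrt_nonneg _)
        (closedBall_midpoint_subset_closedBall hθ hy)]
  · rw [setOf_le_inner_sub_sub_eq_empty hθy, measure_empty,
      Real.sqrt_eq_zero'.2 (by linarith), zero_pow hd, ENNReal.ofReal_zero]

lemma integral_uniformUnitBall_fun_norm_sub (hd : d ≠ 0) (f : ℝ → ℝ) :
    ∫ y, f ‖y - c‖ ∂uniformUnitBall d c = ∫ t in 0..1, d * t ^ (d - 1) * f t := by
  have : NeZero d := ⟨hd⟩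
  have hball : volume.real (ball (0 : EuclideanSpace ℝ (Fin d)) 1) ≠ 0 :=
    (ENNReal.toReal_pos (measure_ball_pos _ _ one_pos).ne' measure_ball_lt_top.ne).ne'
  rw [uniformUnitBall, integral_smul_measure, setIntegral_closedBall_fun_norm_sub,
    finrank_euclideanSpace_fin, addHaar_closedBall_one, ENNReal.toReal_inv, ← Measure.real,
    smul_eq_mul, mul_comm (d : ℝ), mul_assoc, inv_mul_cancel_left₀ hball,
    ← intervalIntegral.integral_const_mul]
  simp_rw [mul_assoc]

end Uniform

lemma integral_mul_sqrt_pow_eq_integral_mul_rpow {g : ℝ → ℝ} (hg : Continuous g) {θ b : ℝ}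
    (hθ : 0 ≤ θ) (hb : 2 * √θ ≤ b) {d : ℕ} (hd : d ≠ 0) :
    ∫ t in 0..b, g t * √(t ^ 2 / 4 - θ) ^ d
      = ∫ t in 2 * √θ..b, g t * (t ^ 2 / 4 - θ) ^ ((d : ℝ) / 2) := by
  have hcont : Continuous fun t => g t * √(t ^ 2 / 4 - θ) ^ d := by fun_prop
  have hsq : (2 * √θ) ^ 2 = 4 * θ := by rw [mul_pow, Real.sq_sqrt hθ]; ring
  have hvanish : ∫ t in 0..2 * √θ, g t * √(t ^ 2 / 4 - θ) ^ d = 0 := by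
    refine (intervalIntegral.integral_congr fun t ht => ?_).trans intervalIntegral.integral_zero
    rw [Set.uIcc_of_le (by positivity)] at ht
    have hneg : t ^ 2 / 4 - θ ≤ 0 := by nlinarith [ht.1, ht.2]
    simp only [Real.sqrt_eq_zero'.2 hneg, zero_pow hd, mul_zero]
  rw [← intervalIntegral.integral_add_adjacent_intervals (b := 2 * √θ)
    (hcont.intervalIntegrable _ _) (hcont.intervalIntegrable _ _), hvanish, zero_add]
  refine intervalIntegral.integral_congr fun t ht => ?_
  rw [Set.uIcc_of_le hb] at ht
  have hnonneg : 0 ≤ t ^ 2 / 4 - θ := by nlinarith [ht.1, Real.sqrt_nonneg θ]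
  rw [Real.sqrt_eq_rpow, ← Real.rpow_natCast, ← Real.rpow_mul hnonneg, one_div_mul_eq_div]

theorem separability_theta_pos (d : ℕ) (hd : 0 < d) (θ : ℝ) (hθ₀ : 0 < θ) (hθ₁ : θ < 1 / 4)
    (c : EuclideanSpace ℝ (Fin d)) :
    (((uniformUnitBall d c).prod (uniformUnitBall d c))
      {p : EuclideanSpace ℝ (Fin d) × EuclideanSpace ℝ (Fin d) |
        θ ≤ ⟪p.2 - p.1, p.1 - c⟫}).toReal
      = ∫ t in (2 * Real.sqrt θ)..1,
          (d : ℝ) * t ^ (d - 1) * (t ^ 2 / 4 - θ) ^ ((d : ℝ) / 2) := by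
  set ν := uniformUnitBall d c
  have hS : MeasurableSet {p : EuclideanSpace ℝ (Fin d) × EuclideanSpace ℝ (Fin d) |
      θ ≤ ⟪p.2 - p.1, p.1 - c⟫} :=
    measurableSet_le measurable_const (by fun_prop)
  have hslices : ∀ᵐ y ∂ν,
      ν {x | θ ≤ ⟪y - x, x - c⟫} = ENNReal.ofReal (√(‖y - c‖ ^ 2 / 4 - θ) ^ d) := by
    filter_upwards [ae_uniformUnitBall_mem_closedBall] with y hy
      using uniformUnitBall_setOf_le_inner_sub_sub hd.ne' hθ₀.le hy
  have hθ_le : 2 * √θ ≤ 1 := by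
    have : √θ ≤ 1 / 2 := Real.sqrt_le_iff.2 ⟨by norm_num, by linarith⟩
    linarith
  calc _ = (∫⁻ y, ν {x | θ ≤ ⟪y - x, x - c⟫} ∂ν).toReal := by
        rw [Measure.prod_apply_symm hS]; rfl
    _ = ∫ y, √(‖y - c‖ ^ 2 / 4 - θ) ^ d ∂ν := by
        rw [lintegral_congr_ae hslices, integral_eq_lintegral_of_nonneg_ae
          (ae_of_all _ fun _ => by positivity) (by fun_prop : Continuous _).aestronglyMeasurable]
    _ = ∫ t in 0..1, d * t ^ (d - 1) * √(t ^ 2 / 4 - θ) ^ d :=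
        integral_uniformUnitBall_fun_norm_sub hd.ne' fun t => √(t ^ 2 / 4 - θ) ^ d
    _ = _ := integral_mul_sqrt_pow_eq_integral_mul_rpow (by fun_prop) hθ₀.le hθ_le hd.ne'
end

section
/- Let d and k be positive integers, let X and Y be Borel probability measures on R^d, and let c be a point of R^d. Let p_Y = (Y tensor Y)({(y', y) : inner product of (y' - y) with (y - c) is at least 0}) and p_{YX} = (X tensor Y)({(x, y) : inner product of (x - y) with (y - c) is at least 0}), and suppose p_Y > 0 and p_{YX} > 0. Define n(Y) and n(Y,X) by p_Y = 2^(-(n(Y)+1)) and p_{YX} = 2^(-(n(Y,X)+1)). Consider independent samples y_1, ..., y_k from Y, and independent evaluation points y from Y and x from X. Then: (i) the probability that the sum over i from 1 to k of the inner product of (y - y_i) with (y_i - c) is nonnegative lies between 2^(-k(n(Y)+1)) and 1 - (1 - 2^(-(n(Y)+1)))^k; and (ii) the probability that the sum over i from 1 to k of the inner product of (x - y_i) with (y_i - c) is negative lies between (1 - 2^(-(n(Y,X)+1)))^k and 1 - 2^(-k(n(Y,X)+1)). -/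
/-!
Given the evaluation point `x`, the events `⟪x - yᵢ, yᵢ - c⟫ ≥ 0` are independent, each of
probability `f x`, where `∫ f = p` is the one-sample probability. Hence all `k` of them hold with
probability `∫ f ^ k ≥ p ^ k` (Jensen), and all `k` fail with probability
`∫ (1 - f) ^ k ≥ (1 - p) ^ k`. The sum is nonnegative in the first case and negative in the
second, which gives both bounds.
-/

open MeasureTheory Set
open scoped RealInnerProductSpace ENNReal

theorem pow_lintegral_le_lintegral_pow {α : Type*} [MeasurableSpace α] {μ : Measure α}
    [IsProbabilityMeasure μ] {f : α → ℝ≥0∞} (hf : AEMeasurable f μ) (n : ℕ) :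
    (∫⁻ x, f x ∂μ) ^ n ≤ ∫⁻ x, f x ^ n ∂μ := by
  rcases n.eq_zero_or_pos with rfl | hn
  · simp
  have hn' : (0 : ℝ) < n := by exact_mod_cast hn
  have h := eLpNorm'_le_eLpNorm'_of_exponent_le one_pos (Nat.one_le_cast.mpr hn) μ
    hf.aestronglyMeasurable
  simp only [eLpNorm', enorm_eq_self, ENNReal.rpow_one, div_one, ENNReal.rpow_natCast] at h
  calc (∫⁻ x, f x ∂μ) ^ n ≤ ((∫⁻ x, f x ^ n ∂μ) ^ (1 / (n : ℝ))) ^ n := by gcongr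
    _ = ∫⁻ x, f x ^ n ∂μ := by
      rw [← ENNReal.rpow_natCast, ← ENNReal.rpow_mul, one_div_mul_cancel hn'.ne',
        ENNReal.rpow_one]

theorem probReal_setOf_neg_eq_one_sub {α : Type*} [MeasurableSpace α] {μ : Measure α}
    [IsProbabilityMeasure μ] {f : α → ℝ} (hf : Measurable f) :
    μ.real {x | f x < 0} = 1 - μ.real {x | 0 ≤ f x} := by
  rw [← probReal_compl_eq_one_sub (measurableSet_le measurable_const hf)]
  congr 1
  ext
  simp

section SumOfSamples

variable {α β ι : Type*} [MeasurableSpace α] [MeasurableSpace β]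

theorem MeasurableSet.setOf_forall_prod_mem [Countable ι] {S : Set (α × β)}
    (hS : MeasurableSet S) : MeasurableSet {p : α × (ι → β) | ∀ i, (p.1, p.2 i) ∈ S} := by
  simp only [ofPred_forall]
  exact .iInter fun i => hS.preimage (by fun_prop)

variable [Fintype ι]

theorem measure_prod_pi_setOf_forall_mem (μ : Measure α) (ν : Measure β) [SigmaFinite ν]
    {S : Set (α × β)} (hS : MeasurableSet S) :
    (μ.prod (Measure.pi fun _ : ι => ν)) {p | ∀ i, (p.1, p.2 i) ∈ S}
      = ∫⁻ x, ν (Prod.mk x ⁻¹' S) ^ Fintype.card ι ∂μ := by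
  rw [Measure.prod_apply hS.setOf_forall_prod_mem]
  refine lintegral_congr fun x => ?_
  have hslice : Prod.mk x ⁻¹' {p : α × (ι → β) | ∀ i, (p.1, p.2 i) ∈ S}
      = univ.pi fun _ => Prod.mk x ⁻¹' S := by
    ext
    simp
  rw [hslice, Measure.pi_pi, Finset.prod_const, Finset.card_univ]

variable (μ : Measure α) (ν : Measure β) [IsProbabilityMeasure μ] [IsProbabilityMeasure ν]

theorem measureReal_prod_pow_le_measureReal_prod_pi_forall {S : Set (α × β)}
    (hS : MeasurableSet S) :
    (μ.prod ν).real S ^ Fintype.card ι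
      ≤ (μ.prod (Measure.pi fun _ : ι => ν)).real {p | ∀ i, (p.1, p.2 i) ∈ S} := by
  rw [measureReal_def, measureReal_def, ← ENNReal.toReal_pow]
  refine ENNReal.toReal_mono (measure_ne_top _ _) ?_
  rw [Measure.prod_apply hS, measure_prod_pi_setOf_forall_mem μ ν hS]
  exact pow_lintegral_le_lintegral_pow (measurable_measure_prodMk_left hS).aemeasurable _

variable {g : α × β → ℝ}

theorem measureReal_prod_pow_le_measureReal_prod_pi_sum_nonneg (hg : Measurable g) :
    (μ.prod ν).real {q | 0 ≤ g q} ^ Fintype.card ι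
      ≤ (μ.prod (Measure.pi fun _ : ι => ν)).real {p | 0 ≤ ∑ i, g (p.1, p.2 i)} :=
  (measureReal_prod_pow_le_measureReal_prod_pi_forall μ ν
    (measurableSet_le measurable_const hg)).trans
    (measureReal_mono fun p (hp : ∀ i, 0 ≤ g (p.1, p.2 i)) =>
      (Finset.sum_nonneg fun i _ => hp i : 0 ≤ ∑ i, g (p.1, p.2 i)))

theorem measureReal_prod_pi_sum_nonneg_le_one_sub [Nonempty ι] (hg : Measurable g) :
    (μ.prod (Measure.pi fun _ : ι => ν)).real {p | 0 ≤ ∑ i, g (p.1, p.2 i)}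
      ≤ 1 - (1 - (μ.prod ν).real {q | 0 ≤ g q}) ^ Fintype.card ι := by
  set N : Set (α × β) := {q | g q < 0}
  have hN : MeasurableSet N := measurableSet_lt hg measurable_const
  have hsub :
      {p : α × (ι → β) | 0 ≤ ∑ i, g (p.1, p.2 i)} ⊆ {p | ∀ i, (p.1, p.2 i) ∈ N}ᶜ :=
    fun p (hp : 0 ≤ ∑ i, g (p.1, p.2 i)) (hneg : ∀ i, g (p.1, p.2 i) < 0) =>
      (Finset.sum_neg (fun i _ => hneg i) Finset.univ_nonempty).not_ge hp
  calc _ ≤ (μ.prod (Measure.pi fun _ : ι => ν)).real {p | ∀ i, (p.1, p.2 i) ∈ N}ᶜ :=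
        measureReal_mono hsub
    _ = 1 - (μ.prod (Measure.pi fun _ : ι => ν)).real {p | ∀ i, (p.1, p.2 i) ∈ N} :=
        probReal_compl_eq_one_sub hN.setOf_forall_prod_mem
    _ ≤ 1 - (μ.prod ν).real N ^ Fintype.card ι := by
        gcongr
        exact measureReal_prod_pow_le_measureReal_prod_pi_forall μ ν hN
    _ = _ := by rw [probReal_setOf_neg_eq_one_sub hg]

end SumOfSamples

theorem intrinsic_dimension_and_learning_general (d k : ℕ) (hk : 0 < k)
    (X Y : Measure (EuclideanSpace ℝ (Fin d)))
    [IsProbabilityMeasure X] [IsProbabilityMeasure Y]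
    (c : EuclideanSpace ℝ (Fin d)) (nY nYX : ℝ)
    -- `p_Y = 2^{-(n(Y)+1)} > 0` defines the intrinsic dimension `n(Y)` of `Y`
    (hnY : ((Y.prod Y)
        {q : EuclideanSpace ℝ (Fin d) × EuclideanSpace ℝ (Fin d) |
          0 ≤ ⟪q.1 - q.2, q.2 - c⟫}).toReal = 2 ^ (-(nY + 1)))
    -- `p_{YX} = 2^{-(n(Y,X)+1)} > 0` defines the relative intrinsic dimension `n(Y,X)`
    (hnYX : ((X.prod Y)
        {q : EuclideanSpace ℝ (Fin d) × EuclideanSpace ℝ (Fin d) |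
          0 ≤ ⟪q.1 - q.2, q.2 - c⟫}).toReal = 2 ^ (-(nYX + 1))) :
    (2 ^ (-((k : ℝ) * (nY + 1)))
        ≤ ((Y.prod (Measure.pi fun _ : Fin k => Y))
            {p : EuclideanSpace ℝ (Fin d) × (Fin k → EuclideanSpace ℝ (Fin d)) |
              0 ≤ ∑ i, ⟪p.1 - p.2 i, p.2 i - c⟫}).toReal
      ∧ ((Y.prod (Measure.pi fun _ : Fin k => Y))
            {p : EuclideanSpace ℝ (Fin d) × (Fin k → EuclideanSpace ℝ (Fin d)) |
              0 ≤ ∑ i, ⟪p.1 - p.2 i, p.2 i - c⟫}).toReal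
          ≤ 1 - (1 - 2 ^ (-(nY + 1))) ^ k)
    ∧ ((1 - 2 ^ (-(nYX + 1))) ^ k
        ≤ ((X.prod (Measure.pi fun _ : Fin k => Y))
            {p : EuclideanSpace ℝ (Fin d) × (Fin k → EuclideanSpace ℝ (Fin d)) |
              ∑ i, ⟪p.1 - p.2 i, p.2 i - c⟫ < 0}).toReal
      ∧ ((X.prod (Measure.pi fun _ : Fin k => Y))
            {p : EuclideanSpace ℝ (Fin d) × (Fin k → EuclideanSpace ℝ (Fin d)) |
              ∑ i, ⟪p.1 - p.2 i, p.2 i - c⟫ < 0}).toReal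
          ≤ 1 - 2 ^ (-((k : ℝ) * (nYX + 1)))) := by
  have : Nonempty (Fin k) := ⟨⟨0, hk⟩⟩
  have hg : Measurable fun q : EuclideanSpace ℝ (Fin d) × EuclideanSpace ℝ (Fin d) =>
      ⟪q.1 - q.2, q.2 - c⟫ := by fun_prop
  have hsum : Measurable fun p : EuclideanSpace ℝ (Fin d) × (Fin k → EuclideanSpace ℝ (Fin d)) =>
      ∑ i, ⟪p.1 - p.2 i, p.2 i - c⟫ := by fun_prop
  have hpow (n : ℝ) : (2 : ℝ) ^ (-((k : ℝ) * (n + 1))) = ((2 : ℝ) ^ (-(n + 1))) ^ k := by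
    rw [← Real.rpow_mul_natCast zero_le_two, mul_comm, neg_mul]
  simp only [← measureReal_def] at hnY hnYX ⊢
  rw [probReal_setOf_neg_eq_one_sub hsum, hpow, hpow, ← hnY, ← hnYX]
  have hYlow := measureReal_prod_pow_le_measureReal_prod_pi_sum_nonneg Y Y (ι := Fin k) hg
  have hYup := measureReal_prod_pi_sum_nonneg_le_one_sub Y Y (ι := Fin k) hg
  have hXlow := measureReal_prod_pow_le_measureReal_prod_pi_sum_nonneg X Y (ι := Fin k) hg
  have hXup := measureReal_prod_pi_sum_nonneg_le_one_sub X Y (ι := Fin k) hg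
  rw [Fintype.card_fin] at hYlow hYup hXlow hXup
  exact ⟨⟨hYlow, hYup⟩, by linarith, by linarith⟩

theorem intrinsic_dimension_and_learning (d k : ℕ) (hd : 0 < d) (hk : 0 < k)
    (X Y : Measure (EuclideanSpace ℝ (Fin d)))
    [IsProbabilityMeasure X] [IsProbabilityMeasure Y]
    (c : EuclideanSpace ℝ (Fin d)) (nY nYX : ℝ)
    -- `p_Y = 2^{-(n(Y)+1)} > 0` defines the intrinsic dimension `n(Y)` of `Y`
    (hnY : ((Y.prod Y)
        {q : EuclideanSpace ℝ (Fin d) × EuclideanSpace ℝ (Fin d) |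
          0 ≤ ⟪q.1 - q.2, q.2 - c⟫}).toReal = 2 ^ (-(nY + 1)))
    -- `p_{YX} = 2^{-(n(Y,X)+1)} > 0` defines the relative intrinsic dimension `n(Y,X)`
    (hnYX : ((X.prod Y)
        {q : EuclideanSpace ℝ (Fin d) × EuclideanSpace ℝ (Fin d) |
          0 ≤ ⟪q.1 - q.2, q.2 - c⟫}).toReal = 2 ^ (-(nYX + 1))) :
    (2 ^ (-((k : ℝ) * (nY + 1)))
        ≤ ((Y.prod (Measure.pi fun _ : Fin k => Y))
            {p : EuclideanSpace ℝ (Fin d) × (Fin k → EuclideanSpace ℝ (Fin d)) |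
              0 ≤ ∑ i, ⟪p.1 - p.2 i, p.2 i - c⟫}).toReal
      ∧ ((Y.prod (Measure.pi fun _ : Fin k => Y))
            {p : EuclideanSpace ℝ (Fin d) × (Fin k → EuclideanSpace ℝ (Fin d)) |
              0 ≤ ∑ i, ⟪p.1 - p.2 i, p.2 i - c⟫}).toReal
          ≤ 1 - (1 - 2 ^ (-(nY + 1))) ^ k)
    ∧ ((1 - 2 ^ (-(nYX + 1))) ^ k
        ≤ ((X.prod (Measure.pi fun _ : Fin k => Y))
            {p : EuclideanSpace ℝ (Fin d) × (Fin k → EuclideanSpace ℝ (Fin d)) |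
              ∑ i, ⟪p.1 - p.2 i, p.2 i - c⟫ < 0}).toReal
      ∧ ((X.prod (Measure.pi fun _ : Fin k => Y))
            {p : EuclideanSpace ℝ (Fin d) × (Fin k → EuclideanSpace ℝ (Fin d)) |
              ∑ i, ⟪p.1 - p.2 i, p.2 i - c⟫ < 0}).toReal
          ≤ 1 - 2 ^ (-((k : ℝ) * (nYX + 1)))) :=
  intrinsic_dimension_and_learning_general d k hk X Y c nY nYX hnY hnYX
end

section
/- Let alpha and beta be measurable spaces, let nu be a probability measure on alpha and mu a probability measure on beta, let k be a positive integer, and let S be a measurable subset of alpha x beta. Then the probability, under the product of nu with the k-fold product of mu with itself, of the set of pairs (a, (b_1, ..., b_k)) such that (a, b_i) belongs to S for every i from 1 to k, is at least ((nu tensor mu)(S))^k. -/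
open MeasureTheory

/-- Hölder's inequality against the constant function `1`. -/
lemma pow_lintegral_le_lintegral_pow_s14 {α : Type*} [MeasurableSpace α] (ν : Measure α)
    [IsProbabilityMeasure ν] {g : α → ENNReal} (hg : AEMeasurable g ν) (k : ℕ) :
    (∫⁻ a, g a ∂ν) ^ k ≤ ∫⁻ a, g a ^ k ∂ν := by
  obtain hk | hk := le_or_gt k 1
  · interval_cases k <;> simp
  have hpq : Real.HolderConjugate (k : ℝ) (k : ℝ).conjExponent :=
    .conjExponent (by exact_mod_cast hk)
  have holder := ENNReal.lintegral_mul_le_Lp_mul_Lq ν hpq hg (aemeasurable_const (b := 1))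
  simp only [Pi.mul_apply, mul_one, ENNReal.one_rpow, lintegral_const, measure_univ] at holder
  calc (∫⁻ a, g a ∂ν) ^ k = (∫⁻ a, g a ∂ν) ^ (k : ℝ) := (ENNReal.rpow_natCast _ _).symm
    _ ≤ ((∫⁻ a, g a ^ (k : ℝ) ∂ν) ^ (1 / (k : ℝ))) ^ (k : ℝ) :=
        ENNReal.rpow_le_rpow holder (by positivity)
    _ = ∫⁻ a, g a ^ k ∂ν := by
        rw [← ENNReal.rpow_mul, one_div_mul_cancel (by positivity), ENNReal.rpow_one]
        simp_rw [ENNReal.rpow_natCast]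

section SliceProduct

variable {α β ι : Type*} {S : Set (α × β)}

lemma preimage_prodMk_setOf_forall_mem (a : α) :
    Prod.mk a ⁻¹' {p : α × (ι → β) | ∀ i, (p.1, p.2 i) ∈ S}
      = Set.univ.pi fun _ : ι => Prod.mk a ⁻¹' S := by
  ext f
  simp [Set.mem_pi]

variable [MeasurableSpace α] [MeasurableSpace β]

lemma measurableSet_setOf_forall_mem_prod [Countable ι] (hS : MeasurableSet S) :
    MeasurableSet {p : α × (ι → β) | ∀ i, (p.1, p.2 i) ∈ S} := by
  rw [Set.ofPred_forall]
  exact .iInter fun i => (measurable_fst.prodMk ((measurable_pi_apply i).comp measurable_snd)) hS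

/-- The slices of `{(a, b) | ∀ i, (a, b i) ∈ S}` are boxes, so its measure integrates the
`card ι`-th power of the slice measure of `S`. -/
lemma prod_pi_setOf_forall_mem [Fintype ι] (ν : Measure α) (μ : Measure β) [SFinite ν]
    [SigmaFinite μ] (hS : MeasurableSet S) :
    (ν.prod (Measure.pi fun _ : ι => μ)) {p : α × (ι → β) | ∀ i, (p.1, p.2 i) ∈ S}
      = ∫⁻ a, μ (Prod.mk a ⁻¹' S) ^ Fintype.card ι ∂ν := by
  rw [Measure.prod_apply (measurableSet_setOf_forall_mem_prod hS)]
  refine lintegral_congr fun a => ?_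
  rw [preimage_prodMk_setOf_forall_mem, Measure.pi_pi, Finset.prod_const, Finset.card_univ]

end SliceProduct

theorem prod_pi_all_mem_ge_pow_general {α β : Type*} [MeasurableSpace α] [MeasurableSpace β]
    (ν : Measure α) (μ : Measure β) [IsProbabilityMeasure ν] [IsProbabilityMeasure μ]
    (k : ℕ) (S : Set (α × β)) (hS : MeasurableSet S) :
    ((ν.prod μ) S) ^ k
      ≤ (ν.prod (Measure.pi fun _ : Fin k => μ))
          {p : α × (Fin k → β) | ∀ i : Fin k, (p.1, p.2 i) ∈ S} := by
  rw [Measure.prod_apply hS, prod_pi_setOf_forall_mem ν μ hS, Fintype.card_fin]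
  exact pow_lintegral_le_lintegral_pow_s14 ν (measurable_measure_prodMk_left hS).aemeasurable k

theorem prod_pi_all_mem_ge_pow {α β : Type*} [MeasurableSpace α] [MeasurableSpace β]
    (ν : Measure α) (μ : Measure β) [IsProbabilityMeasure ν] [IsProbabilityMeasure μ]
    (k : ℕ) (hk : 0 < k) (S : Set (α × β)) (hS : MeasurableSet S) :
    ((ν.prod μ) S) ^ k
      ≤ (ν.prod (Measure.pi fun _ : Fin k => μ))
          {p : α × (Fin k → β) | ∀ i : Fin k, (p.1, p.2 i) ∈ S} :=
  prod_pi_all_mem_ge_pow_general ν μ k S hS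
end
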